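/- arXiv:2104.02252 — 5 statements merged into one kernel-verified Lean document; each statement's English description precedes it below -/
import Mathlib

section
/- Let X be a metric space, let g : X → ℝ be locally uniformly continuous with g(x) ≠ 0 for every x ∈ X, and let f : X → ℝ be continuous and nowhere locally uniformly continuous. Then the product g·f is nowhere locally uniformly continuous. -/
private lemma ucOn_congr' {X : Type*} [MetricSpace X] {h f : X → ℝ} {S : Set X}
    (hh : UniformContinuousOn h S) (he : ∀ y ∈ S, h y = f y) :
    UniformContinuousOn f S := by
  rw [Metric.uniformContinuousOn_iff] at hh ⊢
  intro ε hε
  obtain ⟨δ, hδ, H⟩ := hh ε hε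
  exact ⟨δ, hδ, fun a ha b hb hab => by
    rw [← he a ha, ← he b hb]; exact H a ha b hb hab⟩

private lemma ucOn_mono' {X : Type*} [MetricSpace X] {f : X → ℝ} {S T : Set X}
    (hf : UniformContinuousOn f S) (hTS : T ⊆ S) : UniformContinuousOn f T := by
  rw [Metric.uniformContinuousOn_iff] at hf ⊢
  intro ε hε
  obtain ⟨δ, hδ, H⟩ := hf ε hε
  exact ⟨δ, hδ, fun a ha b hb hab => H a (hTS ha) b (hTS hb) hab⟩

private lemma ucOn_mul_bounded' {X : Type*} [MetricSpace X] {φ ψ : X → ℝ} {S : Set X} {M : ℝ}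
    (hM : 0 < M)
    (hφ : UniformContinuousOn φ S) (hψ : UniformContinuousOn ψ S)
    (hφb : ∀ y ∈ S, |φ y| ≤ M) (hψb : ∀ y ∈ S, |ψ y| ≤ M) :
    UniformContinuousOn (fun y => φ y * ψ y) S := by
  rw [Metric.uniformContinuousOn_iff] at hφ hψ ⊢
  intro ε hε
  obtain ⟨δ₁, hδ₁, H₁⟩ := hφ (ε / (2 * M)) (by positivity)
  obtain ⟨δ₂, hδ₂, H₂⟩ := hψ (ε / (2 * M)) (by positivity)
  refine ⟨min δ₁ δ₂, lt_min hδ₁ hδ₂, fun a ha b hb hab => ?_⟩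
  have h1 := H₁ a ha b hb (lt_of_lt_of_le hab (min_le_left _ _))
  have h2 := H₂ a ha b hb (lt_of_lt_of_le hab (min_le_right _ _))
  rw [Real.dist_eq] at h1 h2 ⊢
  have key : φ a * ψ a - φ b * ψ b = (φ a - φ b) * ψ a + φ b * (ψ a - ψ b) := by ring
  have hδM : ε / (2 * M) * M = ε / 2 := by field_simp
  calc |φ a * ψ a - φ b * ψ b| ≤ |φ a - φ b| * |ψ a| + |φ b| * |ψ a - ψ b| := by
        rw [key]
        exact (abs_add_le _ _).trans (by rw [abs_mul, abs_mul])
    _ < ε / (2 * M) * M + M * (ε / (2 * M)) := by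
        have b1 : |φ a - φ b| * |ψ a| ≤ |φ a - φ b| * M :=
          mul_le_mul_of_nonneg_left (hψb a ha) (abs_nonneg _)
        have b2 : |φ b| * |ψ a - ψ b| ≤ M * |ψ a - ψ b| :=
          mul_le_mul_of_nonneg_right (hφb b hb) (abs_nonneg _)
        have c1 : |φ a - φ b| * M < ε / (2 * M) * M :=
          mul_lt_mul_of_pos_right h1 hM
        have c2 : M * |ψ a - ψ b| < M * (ε / (2 * M)) :=
          mul_lt_mul_of_pos_left h2 hM
        linarith
    _ = ε := by rw [hδM, mul_comm M, hδM]; ring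

private lemma ucOn_inv' {X : Type*} [MetricSpace X] {g : X → ℝ} {S : Set X} {c : ℝ}
    (hc : 0 < c) (hg : UniformContinuousOn g S) (hgb : ∀ y ∈ S, c ≤ |g y|) :
    UniformContinuousOn (fun y => (g y)⁻¹) S := by
  rw [Metric.uniformContinuousOn_iff] at hg ⊢
  intro ε hε
  obtain ⟨δ, hδ, H⟩ := hg (ε * c * c) (by positivity)
  refine ⟨δ, hδ, fun a ha b hb hab => ?_⟩
  have h1 := H a ha b hb hab
  rw [Real.dist_eq] at h1 ⊢
  have haa : (0:ℝ) < |g a| := lt_of_lt_of_le hc (hgb a ha)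
  have hbb : (0:ℝ) < |g b| := lt_of_lt_of_le hc (hgb b hb)
  have ha0 : g a ≠ 0 := abs_pos.mp haa
  have hb0 : g b ≠ 0 := abs_pos.mp hbb
  have key : (g a)⁻¹ - (g b)⁻¹ = (g b - g a) / (g a * g b) := by
    field_simp
  rw [key, abs_div, abs_mul]
  rw [div_lt_iff₀ (by positivity)]
  have h3 : ε * c * c ≤ ε * (|g a| * |g b|) := by
    rw [mul_assoc]
    exact mul_le_mul_of_nonneg_left
      (mul_le_mul (hgb a ha) (hgb b hb) hc.le haa.le) hε.le
  have h2 : |g b - g a| < ε * c * c := by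
    rw [abs_sub_comm]; exact h1
  linarith

/-- The product of a zero-free locally uniformly continuous real-valued function and a
continuous, nowhere locally uniformly continuous real-valued function is nowhere locally
uniformly continuous. -/
theorem mul_nowhereLocallyUniformlyContinuous
    {X : Type*} [MetricSpace X] (g f : X → ℝ)
    (hg : ∀ x : X, ∃ U ∈ nhds x, UniformContinuousOn g U)
    (hg0 : ∀ x : X, g x ≠ 0)
    (hf : Continuous f)
    (hnluc : ∀ x : X, ¬ ∃ U ∈ nhds x, UniformContinuousOn f U) :
    ∀ x : X, ¬ ∃ U ∈ nhds x, UniformContinuousOn (fun y => g y * f y) U := by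
  intro x h
  apply hnluc x
  obtain ⟨U, hU, hUC⟩ := h
  obtain ⟨V, hV, hVg⟩ := hg x
  have hgcont : ContinuousAt g x := hVg.continuousOn.continuousAt hV
  have hgfcont : ContinuousAt (fun y => g y * f y) x := hUC.continuousOn.continuousAt hU
  set c : ℝ := |g x| / 2 with hc_def
  have hc : 0 < c := by
    have := abs_pos.mpr (hg0 x); rw [hc_def]; linarith
  set M : ℝ := |g x * f x| + 1 with hM_def
  have hM : 0 < M := by positivity
  have hS1 : g ⁻¹' {t : ℝ | c < |t|} ∈ nhds x := by
    apply hgcont.preimage_mem_nhds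
    refine (isOpen_lt continuous_const continuous_abs).mem_nhds ?_
    show c < |g x|
    rw [hc_def]; linarith [abs_pos.mpr (hg0 x)]
  have hS2 : (fun y => g y * f y) ⁻¹' {t : ℝ | |t| < M} ∈ nhds x := by
    apply hgfcont.preimage_mem_nhds
    refine (isOpen_lt continuous_abs continuous_const).mem_nhds ?_
    show |g x * f x| < M
    rw [hM_def]; linarith
  set W := U ∩ V ∩ g ⁻¹' {t : ℝ | c < |t|} ∩ (fun y => g y * f y) ⁻¹' {t : ℝ | |t| < M} with hW_def
  have hWnhds : W ∈ nhds x := Filter.inter_mem (Filter.inter_mem (Filter.inter_mem hU hV) hS1) hS2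
  have hWU : W ⊆ U := fun y hy => hy.1.1.1
  have hWV : W ⊆ V := fun y hy => hy.1.1.2
  have hWc : ∀ y ∈ W, c ≤ |g y| := fun y hy => le_of_lt hy.1.2
  have hWM : ∀ y ∈ W, |g y * f y| ≤ M := fun y hy => le_of_lt hy.2
  have hgW : UniformContinuousOn g W := ucOn_mono' hVg hWV
  have hgfW : UniformContinuousOn (fun y => g y * f y) W := ucOn_mono' hUC hWU
  have hginvW : UniformContinuousOn (fun y => (g y)⁻¹) W := ucOn_inv' hc hgW hWc
  set M₀ : ℝ := M + c⁻¹ with hM₀_def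
  have hM₀ : 0 < M₀ := by positivity
  have hb1 : ∀ y ∈ W, |g y * f y| ≤ M₀ := fun y hy => le_trans (hWM y hy) (by
    have h0 : (0:ℝ) < c⁻¹ := by positivity
    rw [hM₀_def]; linarith)
  have hb2 : ∀ y ∈ W, |(g y)⁻¹| ≤ M₀ := by
    intro y hy
    rw [abs_inv]
    have h1 : |g y|⁻¹ ≤ c⁻¹ := by
      apply inv_anti₀ hc (hWc y hy)
    rw [hM₀_def]; linarith
  have hprod : UniformContinuousOn (fun y => (g y * f y) * (g y)⁻¹) W :=
    ucOn_mul_bounded' hM₀ hgfW hginvW hb1 hb2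
  refine ⟨W, hWnhds, ucOn_congr' hprod fun y hy => ?_⟩
  have hgy : g y ≠ 0 := by
    intro h0
    have := hWc y hy
    rw [h0] at this; simp at this; linarith
  field_simp
end

section
/- Let X be a nonseparable metric space. Then there exists a locally discrete collection of nonempty open subsets of X of cardinality ℵ₁; that is, there is a family (U_i)_{i ∈ I} of pairwise distinct nonempty open subsets of X indexed by a set I of cardinality ℵ₁ such that every point of X has a neighborhood that meets U_i for at most one index i. -/
open Metric Set

/-- In a nonseparable metric space there is some `ε > 0` and an uncountable `ε`-separated set. -/
lemma exists_uncountable_separated_set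
    {X : Type*} [MetricSpace X]
    (hsep : ¬ TopologicalSpace.SeparableSpace X) :
    ∃ ε > (0 : ℝ), ∃ S : Set X,
      (∀ x ∈ S, ∀ y ∈ S, x ≠ y → ε ≤ dist x y) ∧ ¬ S.Countable := by
  by_contra h
  push_neg at h
  apply hsep
  have : SecondCountableTopology X := by
    apply Metric.secondCountable_of_almost_dense_set
    intro ε hε
    -- take a maximal ε-separated set
    have hzorn : ∀ c ⊆ {S : Set X | ∀ x ∈ S, ∀ y ∈ S, x ≠ y → ε ≤ dist x y},
        IsChain (· ⊆ ·) c →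
        ∃ ub ∈ {S : Set X | ∀ x ∈ S, ∀ y ∈ S, x ≠ y → ε ≤ dist x y}, ∀ s ∈ c, s ⊆ ub := by
      intro c hc hchain
      refine ⟨⋃₀ c, ?_, fun s hs => subset_sUnion_of_mem hs⟩
      rintro x ⟨s, hs, hxs⟩ y ⟨t, ht, hyt⟩ hxy
      rcases hchain.total hs ht with hst | hts
      · exact hc ht x (hst hxs) y hyt hxy
      · exact hc hs x hxs y (hts hyt) hxy
    obtain ⟨S, hS, hmax⟩ := zorn_subset
      {S : Set X | ∀ x ∈ S, ∀ y ∈ S, x ≠ y → ε ≤ dist x y} hzorn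
    refine ⟨S, ?_, fun x => ?_⟩
    · exact h ε hε S hS
    · by_cases hx : ∃ y ∈ S, dist x y ≤ ε
      · exact hx
      · push_neg at hx
        exfalso
        have hxS : x ∉ S := fun hxS => by
          have := hx x hxS; simp at this; linarith
        have : insert x S ∈ {S : Set X | ∀ x ∈ S, ∀ y ∈ S, x ≠ y → ε ≤ dist x y} := by
          intro a ha b hb hab
          rcases ha with rfl | ha
          · rcases hb with rfl | hb
            · exact absurd rfl hab
            · exact le_of_lt (hx b hb)
          · rcases hb with rfl | hb
            · rw [dist_comm]; exact le_of_lt (hx a ha)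
            · exact hS a ha b hb hab
        have hsub : insert x S ⊆ S := hmax this (subset_insert x S)
        exact hxS (hsub (mem_insert x S))
  infer_instance

/-- A nonseparable metric space admits a locally discrete family of `ℵ₁` pairwise distinct
nonempty open sets: every point has a neighborhood meeting `U i` for at most one index `i`. -/
theorem exists_locallyDiscrete_family_of_not_separable
    {X : Type*} [MetricSpace X]
    (hsep : ¬ TopologicalSpace.SeparableSpace X) :
    ∃ (I : Type) (U : I → Set X),
      Cardinal.mk I = Cardinal.aleph 1 ∧
      Function.Injective U ∧
      (∀ i : I, IsOpen (U i) ∧ (U i).Nonempty) ∧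
      (∀ x : X, ∃ N ∈ nhds x,
        ∀ i j : I, (N ∩ U i).Nonempty → (N ∩ U j).Nonempty → i = j) := by
  obtain ⟨ε, hε, S, hsepS, hSc⟩ := exists_uncountable_separated_set hsep
  -- index type of cardinality ℵ₁
  set I : Type := (Cardinal.aleph 1 : Cardinal.{0}).out with hI
  have hmkI : Cardinal.mk I = Cardinal.aleph 1 := Cardinal.mk_out _
  -- embed I into S
  have h1 : (Cardinal.aleph 1 : Cardinal) ≤ Cardinal.mk S := by
    rw [← not_lt]
    intro h
    exact hSc ((Cardinal.countable_iff_lt_aleph_one _).2 h)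
  have h2 : Cardinal.lift.{_} (Cardinal.mk I) ≤ Cardinal.lift.{0} (Cardinal.mk S) := by
    rw [hmkI, Cardinal.lift_aleph]
    simpa using h1
  obtain ⟨e⟩ := Cardinal.lift_mk_le'.1 h2
  set p : I → X := fun i => (e i : X) with hp
  have hpinj : Function.Injective p := fun i j hij =>
    e.injective (Subtype.ext hij)
  have hpS : ∀ i, p i ∈ S := fun i => (e i).2
  refine ⟨I, fun i => ball (p i) (ε / 3), hmkI, ?_, fun i => ⟨isOpen_ball, ?_⟩, fun x => ?_⟩
  · intro i j hij
    have : p i ∈ ball (p j) (ε / 3) := by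
      rw [show ball (p j) (ε / 3) = ball (p i) (ε / 3) from hij.symm]
      exact mem_ball_self (by linarith)
    have hd : dist (p i) (p j) < ε / 3 := mem_ball.1 this
    by_contra hne
    have : ε ≤ dist (p i) (p j) :=
      hsepS _ (hpS i) _ (hpS j) (fun h => hne (hpinj h))
    linarith
  · exact ⟨p i, mem_ball_self (by linarith)⟩
  · refine ⟨ball x (ε / 6), ball_mem_nhds x (by linarith), ?_⟩
    rintro i j ⟨a, ha1, ha2⟩ ⟨b, hb1, hb2⟩
    by_contra hne
    have hij : ε ≤ dist (p i) (p j) :=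
      hsepS _ (hpS i) _ (hpS j) (fun h => hne (hpinj h))
    have : dist (p i) (p j) ≤ dist (p i) a + dist a x + dist x b + dist b (p j) := by
      calc dist (p i) (p j) ≤ dist (p i) b + dist b (p j) := dist_triangle _ _ _
        _ ≤ (dist (p i) a + dist a b) + dist b (p j) := by
            gcongr; exact dist_triangle _ _ _
        _ ≤ (dist (p i) a + (dist a x + dist x b)) + dist b (p j) := by
            gcongr; exact dist_triangle _ _ _
        _ = _ := by ring
    have h1 : dist (p i) a < ε / 3 := by rw [dist_comm]; exact mem_ball.1 ha2
    have h2 : dist a x < ε / 6 := mem_ball.1 ha1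
    have h3 : dist x b < ε / 6 := by rw [dist_comm]; exact mem_ball.1 hb1
    have h4 : dist b (p j) < ε / 3 := mem_ball.1 hb2
    linarith
end

section
/- Let X be a metric space, let A be a subset of ℝ, and let (φ_α)_{α ∈ A} be a family of functions φ_α : X → [0,1] such that for every x ∈ X at most one α ∈ A satisfies φ_α(x) ≠ 0. Let f : X → ℝ be a bounded function with supremum norm ‖f‖_∞. For each r ∈ ℝ define f_r : X → ℝ by f_r(x) = [1 − Σ_{α ∈ A} (1 − |α − r|)·φ_α(x)]·f(x) (the sum has at most one nonzero term at each x, so it is well defined). Then for all p, q ∈ ℝ and all x ∈ X, |f_p(x) − f_q(x)| ≤ |p − q|·‖f‖_∞. -/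
/-- Lipschitz estimate for the family `r ↦ f_r` where
`f_r x = (1 - ∑_{α ∈ A} (1 - |α - r|) φ_α x) · f x`:
`|f_p x - f_q x| ≤ |p - q| · ‖f‖_∞`. -/
theorem abs_sub_le_of_partition_family
    {X : Type*} [MetricSpace X] (A : Set ℝ) (φ : A → X → ℝ)
    (hφ01 : ∀ (α : A) (x : X), φ α x ∈ Set.Icc (0 : ℝ) 1)
    (hone : ∀ x : X, ∀ α β : A, φ α x ≠ 0 → φ β x ≠ 0 → α = β)
    (f : X → ℝ) (hf : BddAbove (Set.range fun x => |f x|))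
    (fr : ℝ → X → ℝ)
    (hfr : ∀ (r : ℝ) (x : X),
      fr r x = (1 - ∑ᶠ α : A, (1 - |(α : ℝ) - r|) * φ α x) * f x) :
    ∀ (p q : ℝ) (x : X), |fr p x - fr q x| ≤ |p - q| * ⨆ y : X, |f y| := by
  intro p q x
  have hsup : |f x| ≤ ⨆ y : X, |f y| := le_ciSup hf x
  have hsup0 : (0:ℝ) ≤ ⨆ y : X, |f y| := le_trans (abs_nonneg _) hsup
  by_cases h : ∃ α : A, φ α x ≠ 0
  · obtain ⟨α₀, hα₀⟩ := h
    have hs : ∀ r : ℝ, ∑ᶠ α : A, (1 - |(α:ℝ) - r|) * φ α x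
        = (1 - |(α₀:ℝ) - r|) * φ α₀ x := by
      intro r
      apply finsum_eq_single _ α₀
      intro β hβ
      by_cases hβ0 : φ β x = 0
      · simp [hβ0]
      · exact absurd (hone x β α₀ hβ0 hα₀) hβ
    rw [hfr, hfr, hs, hs]
    have heq : (1 - (1 - |(α₀:ℝ) - p|) * φ α₀ x) * f x
         - (1 - (1 - |(α₀:ℝ) - q|) * φ α₀ x) * f x
         = ((|(α₀:ℝ) - p| - |(α₀:ℝ) - q|) * φ α₀ x) * f x := by ring
    rw [heq, abs_mul, abs_mul]
    have h1 : |(|(α₀:ℝ) - p| - |(α₀:ℝ) - q|)| ≤ |p - q| := by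
      have := abs_abs_sub_abs_le_abs_sub ((α₀:ℝ) - p) ((α₀:ℝ) - q)
      calc |(|(α₀:ℝ) - p| - |(α₀:ℝ) - q|)| ≤ |((α₀:ℝ) - p) - ((α₀:ℝ) - q)| := this
        _ = |p - q| := by rw [abs_sub_comm]; ring_nf
    have h2 : |φ α₀ x| ≤ 1 := by
      have h := hφ01 α₀ x
      rw [abs_of_nonneg h.1]; exact h.2
    calc |(|(α₀:ℝ) - p| - |(α₀:ℝ) - q|)| * |φ α₀ x| * |f x|
        ≤ |p - q| * 1 * (⨆ y : X, |f y|) := by gcongr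
      _ = |p - q| * (⨆ y : X, |f y|) := by ring
  · push_neg at h
    have hs : ∀ r : ℝ, ∑ᶠ α : A, (1 - |(α:ℝ) - r|) * φ α x = 0 := by
      intro r; simp [h]
    rw [hfr, hfr, hs, hs]
    simpa using mul_nonneg (abs_nonneg (p - q)) hsup0
end

section
/- Let X be a metric space, let A be a subset of ℝ, and let (φ_α)_{α ∈ A} be a family of locally uniformly continuous functions φ_α : X → [0,1] such that every point of X has a neighborhood on which at most one of the functions φ_α is not identically zero. Let r ∈ ℝ, and define g_r : X → ℝ by g_r(x) = 1 − Σ_{α ∈ A} (1 − |α − r|)·φ_α(x) (the sum has at most one nonzero term at each x, so it is well defined). Then g_r is locally uniformly continuous. -/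
/-!
Near each point at most one `φ_α` is not identically zero, so the supports of the `φ_α` form a
locally finite family. On a small neighbourhood of a point, a locally finite sum of locally
uniformly continuous functions is a finite sum of functions uniformly continuous on a common
neighbourhood, and `g_r` is an affine function of such a sum.
-/

open Filter Topology Set Function

def LocallyUniformlyContinuous {X Y : Type*} [UniformSpace X] [UniformSpace Y] (f : X → Y) :
    Prop :=
  ∀ x, ∃ N ∈ 𝓝 x, UniformContinuousOn f N

section

variable {X Y : Type*} [UniformSpace X] [UniformSpace Y]

theorem UniformContinuous.comp_locallyUniformlyContinuous {Z : Type*} [UniformSpace Z]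
    {g : Y → Z} {f : X → Y} (hg : UniformContinuous g) (hf : LocallyUniformlyContinuous f) :
    LocallyUniformlyContinuous (g ∘ f) := fun x =>
  let ⟨N, hN, hfN⟩ := hf x
  ⟨N, hN, hg.comp_uniformContinuousOn hfN⟩

theorem UniformContinuousOn.finset_sum {ι E : Type*} [AddCommGroup E] [UniformSpace E]
    [IsUniformAddGroup E] {f : ι → X → E} {N : Set X} (s : Finset ι)
    (hf : ∀ i ∈ s, UniformContinuousOn (f i) N) :
    UniformContinuousOn (fun x => ∑ i ∈ s, f i x) N :=
  uniformContinuousOn_iff_restrict.2 <|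
    Finset.uniformContinuous_sum s fun i hi => (hf i hi).restrict

theorem LocallyUniformlyContinuous.finsum {ι E : Type*} [AddCommGroup E] [UniformSpace E]
    [IsUniformAddGroup E] {f : ι → X → E} (hf : ∀ i, LocallyUniformlyContinuous (f i))
    (hfin : LocallyFinite fun i => support (f i)) :
    LocallyUniformlyContinuous fun x => ∑ᶠ i, f i x := by
  intro x
  obtain ⟨N, hN, hs⟩ := hfin x
  choose M hM hfM using fun i => hf i x
  set U := N ∩ ⋂ i ∈ hs.toFinset, M i
  have hU : U ∈ 𝓝 x := inter_mem hN ((biInter_finset_mem _).2 fun i _ => hM i)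
  have hfinsum : EqOn (fun y => ∑ i ∈ hs.toFinset, f i y) (fun y => ∑ᶠ i, f i y) U :=
    fun y hy => (finsum_eq_sum_of_support_subset _ fun i hi => by
      simpa using ⟨y, hi, hy.1⟩).symm
  refine ⟨U, hU, (UniformContinuousOn.finset_sum _ fun i hi => ?_).congr hfinsum⟩
  exact (hfM i).mono (inter_subset_right.trans (biInter_subset_of_mem hi))

end

theorem locallyUniformlyContinuous_of_partition_family_general
    {X : Type*} [MetricSpace X] (A : Set ℝ) (φ : A → X → ℝ)
    (hluc : ∀ (α : A) (x : X), ∃ N ∈ nhds x, UniformContinuousOn (φ α) N)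
    (hone : ∀ x : X, ∃ N ∈ nhds x, ∀ α β : A,
      (∃ y ∈ N, φ α y ≠ 0) → (∃ y ∈ N, φ β y ≠ 0) → α = β)
    (r : ℝ) (g : X → ℝ)
    (hg : ∀ x : X, g x = 1 - ∑ᶠ α : A, (1 - |(α : ℝ) - r|) * φ α x) :
    ∀ x : X, ∃ N ∈ nhds x, UniformContinuousOn g N := by
  have hfin : LocallyFinite fun α => support (φ α) := fun x => by
    obtain ⟨N, hN, hsub⟩ := hone x
    exact ⟨N, hN, Subsingleton.finite fun α ⟨y, hyα, hyN⟩ β ⟨z, hzβ, hzN⟩ =>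
      hsub α β ⟨y, hyN, hyα⟩ ⟨z, hzN, hzβ⟩⟩
  have hsum : LocallyUniformlyContinuous fun x => ∑ᶠ α : A, (1 - |(α : ℝ) - r|) * φ α x :=
    LocallyUniformlyContinuous.finsum
      (fun α => (uniformContinuous_id.const_mul' _).comp_locallyUniformlyContinuous (hluc α))
      (hfin.subset fun α => support_mul_subset_right _ _)
  rw [funext hg]
  exact (uniformContinuous_const.sub uniformContinuous_id).comp_locallyUniformlyContinuous hsum

/-- If the `φ_α : X → [0,1]` are locally uniformly continuous and every point has a
neighborhood on which at most one `φ_α` is not identically zero, then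
`g_r x = 1 - ∑_{α ∈ A} (1 - |α - r|) φ_α x` is locally uniformly continuous. -/
theorem locallyUniformlyContinuous_of_partition_family
    {X : Type*} [MetricSpace X] (A : Set ℝ) (φ : A → X → ℝ)
    (hφ01 : ∀ (α : A) (x : X), φ α x ∈ Set.Icc (0 : ℝ) 1)
    (hluc : ∀ (α : A) (x : X), ∃ N ∈ nhds x, UniformContinuousOn (φ α) N)
    (hone : ∀ x : X, ∃ N ∈ nhds x, ∀ α β : A,
      (∃ y ∈ N, φ α y ≠ 0) → (∃ y ∈ N, φ β y ≠ 0) → α = β)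
    (r : ℝ) (g : X → ℝ)
    (hg : ∀ x : X, g x = 1 - ∑ᶠ α : A, (1 - |(α : ℝ) - r|) * φ α x) :
    ∀ x : X, ∃ N ∈ nhds x, UniformContinuousOn g N :=
  locallyUniformlyContinuous_of_partition_family_general A φ hluc hone r g hg
end

section
/- Let S be a nonempty metric space with metric d_S that is nowhere locally compact (no point of S has a compact neighborhood), and let X = S × ℝ be equipped with the metric d((s₁, α₁), (s₂, α₂)) = d_S(s₁, s₂) + d_d(α₁, α₂), where d_d is the discrete metric on ℝ (d_d(α, β) = 0 if α = β and d_d(α, β) = 1 otherwise). Then the set of bounded continuous real-valued functions on X that are nowhere locally uniformly continuous is not a Borel subset of the space C_b(X) of bounded continuous real-valued functions on X equipped with the supremum norm. -/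
open MeasureTheory

/-- The product `S × ℝ`, to be equipped with the metric
`d((s₁,α₁),(s₂,α₂)) = d_S(s₁,s₂) + d_d(α₁,α₂)` where `d_d` is the discrete metric on `ℝ`. -/
structure SumDiscreteProd (S : Type*) where
  fst : S
  snd : ℝ

/-- The metric `d_S(s₁,s₂) + d_d(α₁,α₂)`, where `d_d` is the discrete metric on `ℝ`. -/
noncomputable def sdDist {S : Type*} [MetricSpace S] (p q : SumDiscreteProd S) : ℝ :=
  dist p.fst q.fst + (if p.snd = q.snd then 0 else 1)

theorem sdDist_self {S : Type*} [MetricSpace S] (p : SumDiscreteProd S) : sdDist p p = 0 := by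
  simp [sdDist]

theorem sdDist_comm {S : Type*} [MetricSpace S] (p q : SumDiscreteProd S) :
    sdDist p q = sdDist q p := by
  simp only [sdDist, dist_comm p.fst q.fst, eq_comm]

theorem sdDist_triangle {S : Type*} [MetricSpace S] (p q r : SumDiscreteProd S) :
    sdDist p r ≤ sdDist p q + sdDist q r := by
  have key : ∀ a b c : ℝ, (if a = c then (0:ℝ) else 1) ≤
      (if a = b then (0:ℝ) else 1) + (if b = c then (0:ℝ) else 1) := by
    intro a b c
    by_cases hab : a = b <;> by_cases hbc : b = c <;>
      simp [hab, hbc] <;> (try split) <;> norm_num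
  have h1 : dist p.fst r.fst ≤ dist p.fst q.fst + dist q.fst r.fst := dist_triangle _ _ _
  have h2 := key p.snd q.snd r.snd
  simp only [sdDist]
  linarith

theorem sdDist_eq_zero {S : Type*} [MetricSpace S] {p q : SumDiscreteProd S}
    (h : sdDist p q = 0) : p = q := by
  simp only [sdDist] at h
  have h1 : (0:ℝ) ≤ dist p.fst q.fst := dist_nonneg
  have h2 : (0:ℝ) ≤ (if p.snd = q.snd then (0:ℝ) else 1) := by positivity
  have hfst : dist p.fst q.fst = 0 := by linarith
  have hsnd : (if p.snd = q.snd then (0:ℝ) else 1) = 0 := by linarith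
  have hs : p.snd = q.snd := by by_contra hc; simp [hc] at hsnd
  have hf : p.fst = q.fst := by rwa [dist_eq_zero] at hfst
  cases p; cases q; simp_all

noncomputable instance SumDiscreteProd.metricSpace (S : Type*) [MetricSpace S] :
    MetricSpace (SumDiscreteProd S) where
  dist := sdDist
  dist_self := sdDist_self
  dist_comm := sdDist_comm
  dist_triangle := sdDist_triangle
  eq_of_dist_eq_zero := sdDist_eq_zero

/-!
Since `S` is nowhere locally compact, every open set contains a sequence without cluster points.
Pairing each term with a nearby point outside all these sequences and separating the two
resulting closed sets by Urysohn's lemma yields, at scale `2⁻ⁿ`, a function `uₙ : S → [0,1]`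
that jumps from `1` to `0` over arbitrarily short distances near every point, at places where the
earlier functions are almost constant. Then `h = ∑ 4⁻ⁿ uₙ` is uniformly continuous on no ball,
and `(s, α) ↦ c(α) h(s)` is nowhere locally uniformly continuous on `X` iff `c` has no zero.

A point `x` of the Baire space codes the open set `⋃ₙ Cₙ(x n)` of sequences of pairs, where `Cₙ(k)`
is the cylinder coded by `k`. Fixing a surjection `E : ℝ → ℕ^ℕ` and putting
`c_x(α) = ∑ 2⁻ⁿ [(x, E α) ∈ Cₙ(x n)]` gives a continuous map `x ↦ c_x(α) h(s)` into `C_b(X)`, which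
pulls the set of nowhere locally uniformly continuous functions back to
`{x | (x, z) ∈ ⋃ₙ Cₙ(x n) for all z}`. A diagonal argument against a code of the closed set whose
projection it would be shows that this set is not analytic, whereas Borel sets pull back to Borel,
hence analytic, subsets of the Baire space.
-/

open Set Filter Topology Metric
open scoped BoundedContinuousFunction

def NowhereLocallyCompact (X : Type*) [TopologicalSpace X] : Prop :=
  ∀ x : X, ¬ ∃ K ∈ 𝓝 x, IsCompact K

section Topology

variable {X : Type*} [TopologicalSpace X]

theorem NowhereLocallyCompact.infinite_of_mem_nhds (hX : NowhereLocallyCompact X) {U : Set X}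
    {x : X} (hU : U ∈ 𝓝 x) : U.Infinite :=
  fun hfin => hX x ⟨U, hU, hfin.isCompact⟩

theorem locallyFinite_singleton_of_forall_not_mapClusterPt {z : ℕ → X}
    (hz : ∀ t, ¬ MapClusterPt t atTop z) : LocallyFinite fun k => ({z k} : Set X) := by
  intro t
  obtain ⟨U, hU, hfreq⟩ : ∃ U ∈ 𝓝 t, ∀ᶠ k in atTop, z k ∉ U := by
    simpa [mapClusterPt_iff_frequently, not_frequently] using hz t
  rw [← Nat.cofinite_eq_atTop, eventually_cofinite] at hfreq
  exact ⟨U, hU, by simpa using hfreq⟩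

theorem LocallyFinite.uncurry_of_subset {ι κ : Type*} {v : ι → Set X} {f : ι → κ → Set X}
    (hv : LocallyFinite v) (hf : ∀ i, LocallyFinite (f i)) (hfv : ∀ i j, f i j ⊆ v i) :
    LocallyFinite (Function.uncurry f) := by
  intro x
  obtain ⟨U, hU, hUfin⟩ := hv x
  choose W hW hWfin using fun i => hf i x
  refine ⟨U ∩ ⋂ i ∈ {i | (v i ∩ U).Nonempty}, W i,
    inter_mem hU ((biInter_mem hUfin).2 fun i _ => hW i), ?_⟩
  refine (hUfin.biUnion fun i _ => (hWfin i).image (Prod.mk i)).subset ?_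
  rintro ⟨i, j⟩ ⟨y, hyf, hyU, hyW⟩
  have hi : (v i ∩ U).Nonempty := ⟨y, hfv i j hyf, hyU⟩
  exact mem_biUnion hi ⟨j, ⟨y, hyf, mem_iInter₂.1 hyW i hi⟩, rfl⟩

theorem NowhereLocallyCompact.exists_mem_notMem_iUnion (hX : NowhereLocallyCompact X)
    {ι : Type*} {f : ι → Set X} (hf : LocallyFinite f) (hfin : ∀ i, (f i).Finite) {U : Set X}
    {x : X} (hU : U ∈ 𝓝 x) : ∃ q ∈ U, q ∉ ⋃ i, f i := by
  obtain ⟨W, hW, hWfin⟩ := hf x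
  have hWf : (W ∩ ⋃ i, f i).Finite := (hWfin.biUnion fun i _ => hfin i).subset fun y ⟨hyW, hy⟩ =>
    let ⟨i, hi⟩ := mem_iUnion.1 hy
    mem_biUnion ⟨y, hi, hyW⟩ hi
  obtain ⟨q, ⟨hqU, hqW⟩, hq⟩ := ((hX.infinite_of_mem_nhds (inter_mem hU hW)).sdiff hWf).nonempty
  exact ⟨q, hqU, fun h => hq ⟨hqW, h⟩⟩

end Topology

section Metric

variable {X : Type*} [PseudoMetricSpace X]

theorem MapClusterPt.of_tendsto_dist {z q : ℕ → X} {t : X} (ht : MapClusterPt t atTop q)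
    (hzq : Tendsto (fun k => dist (q k) (z k)) atTop (𝓝 0)) : MapClusterPt t atTop z := by
  obtain ⟨φ, hφ, hlim⟩ := ht.tendsto_subseq
  exact ((hlim.congr_dist (hzq.comp hφ.tendsto_atTop)).mapClusterPt).of_comp hφ.tendsto_atTop

theorem NowhereLocallyCompact.exists_seq_forall_not_mapClusterPt
    (hX : NowhereLocallyCompact X) {U : Set X} {x : X} (hU : U ∈ 𝓝 x) :
    ∃ z : ℕ → X, (∀ k, z k ∈ U) ∧ ∀ t, ¬ MapClusterPt t atTop z := by
  obtain ⟨ε, hε, hεU⟩ := nhds_basis_closedBall.mem_iff.1 hU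
  have hK : ¬ IsSeqCompact (closedBall x ε) := fun h =>
    hX x ⟨_, closedBall_mem_nhds x hε, isCompact_iff_isSeqCompact.2 h⟩
  simp only [IsSeqCompact, not_forall, not_exists, not_and] at hK
  obtain ⟨z, hzK, hz⟩ := hK
  refine ⟨z, fun k => hεU (hzK k), fun t ht => ?_⟩
  obtain ⟨φ, hφ, hlim⟩ := ht.tendsto_subseq
  exact hz t (isClosed_closedBall.mem_of_tendsto hlim (Eventually.of_forall fun k => hzK _)) φ hφ
    hlim

end Metric

theorem exists_seq_of_forall_fin_exists {α : Type*} {P : ∀ n, (Fin n → α) → α → Prop}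
    (h : ∀ n v, ∃ a, P n v a) : ∃ u : ℕ → α, ∀ n, P n (fun m => u m) (u n) := by
  choose F hF using h
  let u : ℕ → α := Nat.strongRec fun n u => F n fun m => u m m.isLt
  have hu : ∀ n, u n = F n fun m => u m := fun n => Nat.strongRec_eq _ n
  exact ⟨u, fun n => hu n ▸ hF _ _⟩

section Series

variable {r : ℝ} {a : ℕ → ℝ}

theorem norm_pow_mul_le_of_abs_le_one (hr₀ : 0 ≤ r) (ha : ∀ m, |a m| ≤ 1) (m : ℕ) :
    ‖r ^ m * a m‖ ≤ r ^ m := by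
  rw [Real.norm_eq_abs, abs_mul, abs_of_nonneg (pow_nonneg hr₀ m)]
  exact mul_le_of_le_one_right (pow_nonneg hr₀ m) (ha m)

theorem summable_pow_mul_of_abs_le_one (hr₀ : 0 ≤ r) (hr₁ : r < 1) (ha : ∀ m, |a m| ≤ 1) :
    Summable fun m => r ^ m * a m :=
  .of_norm_bounded (summable_geometric_of_lt_one hr₀ hr₁) (norm_pow_mul_le_of_abs_le_one hr₀ ha)

theorem abs_tsum_pow_mul_le_of_abs_le_one (hr₀ : 0 ≤ r) (hr₁ : r < 1) (ha : ∀ m, |a m| ≤ 1) :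
    |∑' m, r ^ m * a m| ≤ (1 - r)⁻¹ := by
  simpa using tsum_of_norm_bounded (hasSum_geometric_of_lt_one hr₀ hr₁)
    (norm_pow_mul_le_of_abs_le_one hr₀ ha)

theorem le_abs_tsum_of_eq_one (ha : ∀ m, |a m| ≤ 1) {n : ℕ} (han : a n = 1)
    (hhead : |∑ m ∈ Finset.range n, (1 / 4 : ℝ) ^ m * a m| ≤ (1 / 4) ^ n / 3) :
    (1 / 4 : ℝ) ^ n / 3 ≤ |∑' m, (1 / 4 : ℝ) ^ m * a m| := by
  have htail : |∑' k, (1 / 4 : ℝ) ^ (k + (n + 1)) * a (k + (n + 1))| ≤ (1 / 4) ^ n / 3 := by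
    have hshift : ∀ k, (1 / 4 : ℝ) ^ (k + (n + 1)) * a (k + (n + 1)) =
        (1 / 4) ^ (n + 1) * ((1 / 4) ^ k * a (k + (n + 1))) := fun k => by ring
    rw [tsum_congr hshift, tsum_mul_left, abs_mul, abs_of_pos (by positivity)]
    calc (1 / 4 : ℝ) ^ (n + 1) * |∑' k, (1 / 4 : ℝ) ^ k * a (k + (n + 1))|
        ≤ (1 / 4) ^ (n + 1) * (1 - 1 / 4)⁻¹ := by
          gcongr; exact abs_tsum_pow_mul_le_of_abs_le_one (by norm_num) (by norm_num) fun _ => ha _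
      _ = (1 / 4) ^ n / 3 := by ring
  rw [← (summable_pow_mul_of_abs_le_one (by norm_num) (by norm_num) ha).sum_add_tsum_nat_add
    (n + 1), Finset.sum_range_succ, han, mul_one]
  have h4 : (0 : ℝ) < (1 / 4) ^ n := by positivity
  rw [abs_le] at hhead htail
  rw [le_abs]
  left
  linarith [hhead.1, htail.1]

theorem tsum_half_pow_mul_indicator_ne_zero_iff {β : Type*} {T : ℕ → Set β} {b : β} :
    ∑' n, (1 / 2 : ℝ) ^ n * (T n).indicator 1 b ≠ 0 ↔ ∃ n, b ∈ T n := by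
  have hnn : ∀ n, 0 ≤ (1 / 2 : ℝ) ^ n * (T n).indicator 1 b := fun n =>
    mul_nonneg (by positivity) (indicator_nonneg (fun _ _ => zero_le_one) _)
  refine ⟨fun hne => ?_, fun ⟨n, hn⟩ => ?_⟩
  · by_contra hno
    exact hne (by simp [indicator_of_notMem (not_exists.1 hno _)])
  · refine ((summable_pow_mul_of_abs_le_one (by norm_num) (by norm_num) fun n => ?_).tsum_pos
      hnn n (by simp [hn])).ne'
    by_cases hb : b ∈ T n <;> simp [hb]

end Series

section Metric

variable {S : Type*} [MetricSpace S]

theorem NowhereLocallyCompact.exists_isClosed_disjoint_forall_exists_near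
    (hS : NowhereLocallyCompact S) {r : ℝ} (hr : 0 < r) (N : S → Set S) (hN : ∀ t, N t ∈ 𝓝 t) :
    ∃ A B : Set S, IsClosed A ∧ IsClosed B ∧ Disjoint A B ∧
      ∀ s, ∀ δ > 0, ∃ p ∈ A, ∃ q ∈ B, q ∈ N p ∧ dist p s < r ∧ dist q s < r ∧ dist p q < δ := by
  obtain ⟨v, hvo, hvcov, hvlf, hvr⟩ := precise_refinement (fun s : S => ball s (r / 2))
    (fun _ => isOpen_ball) (iUnion_eq_univ_iff.2 fun s => ⟨s, mem_ball_self (half_pos hr)⟩)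
  let ι := {s // (v s).Nonempty}
  have hvlf' : LocallyFinite fun i : ι => v i := hvlf.comp_injective Subtype.val_injective
  choose z hzv hz using fun i : ι =>
    hS.exists_seq_forall_not_mapClusterPt ((hvo i).mem_nhds i.2.some_mem)
  have hzlf : LocallyFinite (Function.uncurry fun i k => ({z i k} : Set S)) :=
    hvlf'.uncurry_of_subset (fun i => locallyFinite_singleton_of_forall_not_mapClusterPt (hz i))
      fun i k => singleton_subset_iff.2 (hzv i k)
  set A := ⋃ p, Function.uncurry (fun i k => ({z i k} : Set S)) p
  have hq : ∀ (i : ι) (k : ℕ), ∃ q ∈ v i ∩ N (z i k) ∩ ball (z i k) (1 / (k + 1)), q ∉ A :=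
    fun i k => hS.exists_mem_notMem_iUnion hzlf (fun _ => finite_singleton _) <|
      inter_mem (inter_mem ((hvo i).mem_nhds (hzv i k)) (hN _))
        (ball_mem_nhds _ Nat.one_div_pos_of_nat)
  choose q hqv hqA using hq
  have hqz : ∀ i : ι, Tendsto (fun k => dist (q i k) (z i k)) atTop (𝓝 0) := fun i =>
    squeeze_zero (fun _ => dist_nonneg) (fun k => (mem_ball.1 (hqv i k).2).le)
      tendsto_one_div_add_atTop_nhds_zero_nat
  have hqlf : LocallyFinite (Function.uncurry fun i k => ({q i k} : Set S)) :=
    hvlf'.uncurry_of_subset (fun i => locallyFinite_singleton_of_forall_not_mapClusterPt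
      fun t ht => hz i t (ht.of_tendsto_dist (hqz i)))
      fun i k => singleton_subset_iff.2 (hqv i k).1.1
  refine ⟨A, ⋃ p, Function.uncurry (fun i k => ({q i k} : Set S)) p,
    hzlf.isClosed_iUnion fun _ => isClosed_singleton,
    hqlf.isClosed_iUnion fun _ => isClosed_singleton,
    disjoint_iUnion_right.2 fun p => disjoint_singleton_right.2 (hqA p.1 p.2), fun s δ hδ => ?_⟩
  obtain ⟨c, hsc⟩ := mem_iUnion.1 (hvcov.symm ▸ mem_univ s)
  obtain ⟨k, hk⟩ := exists_nat_one_div_lt hδ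
  let i : ι := ⟨c, s, hsc⟩
  have hnear : ∀ t ∈ v c, dist t s < r := fun t ht => by
    linarith [dist_triangle_right t s c, mem_ball.1 (hvr c ht), mem_ball.1 (hvr c hsc)]
  exact ⟨z i k, mem_iUnion.2 ⟨(i, k), rfl⟩, q i k, mem_iUnion.2 ⟨(i, k), rfl⟩, (hqv i k).1.2,
    hnear _ (hzv i k), hnear _ (hqv i k).1.1, by
      rw [dist_comm]; exact (mem_ball.1 (hqv i k).2).trans hk⟩

theorem NowhereLocallyCompact.exists_oscillating_of_continuous (hS : NowhereLocallyCompact S)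
    {r κ : ℝ} (hr : 0 < r) (hκ : 0 < κ) {g : S → ℝ} (hg : Continuous g) :
    ∃ u : S →ᵇ ℝ, (∀ t, u t ∈ Icc (0 : ℝ) 1) ∧ ∀ s, ∀ δ > 0, ∃ p q, dist p s < r ∧
      dist q s < r ∧ dist p q < δ ∧ u p = 1 ∧ u q = 0 ∧ |g p - g q| < κ := by
  obtain ⟨A, B, hA, hB, hAB, hnear⟩ := hS.exists_isClosed_disjoint_forall_exists_near hr
    (fun t => g ⁻¹' ball (g t) κ) fun t => hg.continuousAt (ball_mem_nhds _ hκ)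
  obtain ⟨u, hu0, hu1, hu01⟩ := exists_bounded_zero_one_of_closed hB hA hAB.symm
  refine ⟨u, hu01, fun s δ hδ => ?_⟩
  obtain ⟨p, hp, q, hq, hqp, hps, hqs, hpq⟩ := hnear s δ hδ
  refine ⟨p, q, hps, hqs, hpq, hu1 hp, hu0 hq, ?_⟩
  rw [abs_sub_comm, ← Real.dist_eq]
  exact hqp

theorem NowhereLocallyCompact.exists_forall_not_uniformContinuousOn_ball
    (hS : NowhereLocallyCompact S) :
    ∃ h : S →ᵇ ℝ, ∀ s {r : ℝ}, 0 < r → ¬ UniformContinuousOn h (ball s r) := by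
  -- `uₙ` jumps by `1` where the earlier terms of `h` move by less than `4⁻ⁿ / 3`, and the later
  -- ones can move by at most `4⁻ⁿ / 3` in total
  obtain ⟨u, hu⟩ := exists_seq_of_forall_fin_exists (α := S →ᵇ ℝ)
    (P := fun n v u => (∀ t, u t ∈ Icc (0 : ℝ) 1) ∧ ∀ s, ∀ δ > 0, ∃ p q,
      dist p s < (1 / 2 : ℝ) ^ n ∧ dist q s < (1 / 2 : ℝ) ^ n ∧ dist p q < δ ∧ u p = 1 ∧
      u q = 0 ∧ |∑ m : Fin n, (1 / 4 : ℝ) ^ (m : ℕ) * v m p -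
        ∑ m : Fin n, (1 / 4 : ℝ) ^ (m : ℕ) * v m q| < (1 / 4) ^ n / 3)
    fun n v => hS.exists_oscillating_of_continuous (by positivity) (by positivity) (by fun_prop)
  have hbound : ∀ m t, |u m t| ≤ 1 := fun m t =>
    abs_le.2 ⟨by linarith [((hu m).1 t).1], ((hu m).1 t).2⟩
  have hsum : Summable fun m => (1 / 4 : ℝ) ^ m • u m := by
    refine .of_norm_bounded (g := fun m => (1 / 4 : ℝ) ^ m)
      (summable_geometric_of_lt_one (by norm_num) (by norm_num)) fun m => ?_
    rw [norm_smul, norm_pow, Real.norm_of_nonneg (by norm_num : (0 : ℝ) ≤ 1 / 4)]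
    exact mul_le_of_le_one_right (by positivity)
      ((BoundedContinuousFunction.norm_le zero_le_one).2 (hbound m))
  refine ⟨∑' m, (1 / 4 : ℝ) ^ m • u m, fun s r hr hUC => ?_⟩
  obtain ⟨n, hn⟩ := exists_pow_lt_of_lt_one hr (by norm_num : (1 / 2 : ℝ) < 1)
  obtain ⟨δ, hδ, hUCδ⟩ := Metric.uniformContinuousOn_iff.1 hUC ((1 / 4 : ℝ) ^ n / 3)
    (by positivity)
  obtain ⟨p, q, hps, hqs, hpq, hp, hq, hhead⟩ := (hu n).2 s δ hδ
  have happly : ∀ t, (∑' m, (1 / 4 : ℝ) ^ m • u m) t = ∑' m, (1 / 4 : ℝ) ^ m * u m t :=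
    fun t => by simpa using (BoundedContinuousFunction.evalCLM ℝ t).map_tsum hsum
  have hdist : ∀ m, |u m p - u m q| ≤ 1 := fun m =>
    Real.dist_le_of_mem_Icc_01 ((hu m).1 p) ((hu m).1 q)
  have hhead' : |∑ m ∈ Finset.range n, (1 / 4 : ℝ) ^ m * (u m p - u m q)| ≤ (1 / 4) ^ n / 3 := by
    rw [← Fin.sum_univ_eq_sum_range (fun m => (1 / 4 : ℝ) ^ m * (u m p - u m q)) n]
    simpa only [mul_sub, Finset.sum_sub_distrib] using hhead.le
  have hsep := le_abs_tsum_of_eq_one hdist (by simp [hp, hq]) hhead'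
  refine (hUCδ p (hps.trans hn) q (hqs.trans hn) hpq).not_ge ?_
  rwa [Real.dist_eq, happly, happly, ← Summable.tsum_sub, ← tsum_congr fun m => mul_sub _ _ _]
  all_goals exact summable_pow_mul_of_abs_le_one (by norm_num) (by norm_num) (hbound · _)

end Metric

section BaireSpace

open PiNat

/-- The code `k` stands for the cylinder of sequences whose restriction `res` (a reversed prefix)
is the list `ofNat k`; lists longer than `n` give `∅`, so that membership only depends on the
first `n` terms. -/
def codedCylinder (n k : ℕ) : Set (ℕ → ℕ × ℕ) :=
  {w | (Denumerable.ofNat (List (ℕ × ℕ)) k).length ≤ n ∧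
    res w (Denumerable.ofNat (List (ℕ × ℕ)) k).length = Denumerable.ofNat (List (ℕ × ℕ)) k}

theorem codedCylinder_congr {n k : ℕ} {w w' : ℕ → ℕ × ℕ} (h : ∀ i < n, w i = w' i) :
    w ∈ codedCylinder n k ↔ w' ∈ codedCylinder n k :=
  and_congr_right fun hlen => by rw [res_eq_res.2 fun i hi => h i (hi.trans_le hlen)]

theorem codedCylinder_encode_replicate (n : ℕ) (a : ℕ × ℕ) :
    codedCylinder n (Encodable.encode (List.replicate (n + 1) a)) = ∅ := by
  ext w
  simp [codedCylinder]

theorem codedCylinder_encode_res (w : ℕ → ℕ × ℕ) {m n : ℕ} (h : m ≤ n) :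
    codedCylinder n (Encodable.encode (res w m)) = cylinder w m := by
  ext v
  simp [codedCylinder, h, cylinder_eq_res]

theorem exists_forall_notMem_codedCylinder_iff {F : Set (ℕ → ℕ × ℕ)} (hF : IsClosed F) :
    ∃ x : ℕ → ℕ, ∀ w, (∀ n, w ∉ codedCylinder n (x n)) ↔ w ∈ F := by
  classical
  -- `x n` keeps the cylinder coded by `n.unpair.1` when it misses `F`, so every cylinder coded by a
  -- list of length `m` is tried at some `n ≥ m`
  let x : ℕ → ℕ := fun n => if codedCylinder n n.unpair.1 ⊆ Fᶜ then n.unpair.1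
    else Encodable.encode (List.replicate (n + 1) ((0, 0) : ℕ × ℕ))
  have hx : ∀ n, codedCylinder n (x n) ⊆ Fᶜ := by
    intro n
    dsimp only [x]
    split_ifs with h
    · exact h
    · simp [codedCylinder_encode_replicate]
  refine ⟨x, fun w => ⟨fun h => ?_, fun hw n hn => hx n hn hw⟩⟩
  by_contra hwF
  obtain ⟨_, ⟨y, m, rfl⟩, hwy, hsub⟩ :=
    (isTopologicalBasis_cylinders fun _ => ℕ × ℕ).exists_subset_of_mem_open hwF hF.isOpen_compl
  rw [← mem_cylinder_iff_eq.1 hwy] at hsub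
  let n := Nat.pair (Encodable.encode (res w m)) m
  have hcyl : codedCylinder n n.unpair.1 = cylinder w m := by
    simpa [n] using codedCylinder_encode_res w (Nat.right_le_pair (Encodable.encode (res w m)) m)
  have hxn : x n = n.unpair.1 := if_pos (hcyl ▸ hsub)
  exact h n (by rw [hxn, hcyl]; exact self_mem_cylinder w m)

theorem MeasureTheory.AnalyticSet.exists_isClosed_iff_exists_prod_mem {A : Set (ℕ → ℕ)}
    (hA : AnalyticSet A) :
    ∃ F : Set (ℕ → ℕ × ℕ), IsClosed F ∧ ∀ x, x ∈ A ↔ ∃ z, Function.prod x z ∈ F := by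
  rw [AnalyticSet] at hA
  rcases hA with rfl | ⟨f, hf, rfl⟩
  · exact ⟨∅, isClosed_empty, by simp⟩
  · exact ⟨{w | f (Prod.snd ∘ w) = Prod.fst ∘ w}, isClosed_eq (by fun_prop) (by fun_prop),
      fun x => ⟨fun ⟨z, hz⟩ => ⟨z, hz⟩, fun ⟨z, hz⟩ => ⟨z, hz⟩⟩⟩

theorem not_analyticSet_setOf_forall_exists_codedCylinder :
    ¬ AnalyticSet {x : ℕ → ℕ | ∀ z, ∃ n, Function.prod x z ∈ codedCylinder n (x n)} := by
  intro hA
  obtain ⟨F, hF, hAF⟩ := hA.exists_isClosed_iff_exists_prod_mem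
  obtain ⟨x, hx⟩ := exists_forall_notMem_codedCylinder_iff hF
  have hdiag := hAF x
  simp only [mem_ofPred_eq, ← hx, ← not_exists, ← not_forall] at hdiag
  exact not_iff_self hdiag.symm

theorem isLocallyConstant_setOf_prod_mem_codedCylinder {β : Type*} (g : β → ℕ → ℕ) (n : ℕ) :
    IsLocallyConstant fun x : ℕ → ℕ => {b | Function.prod x (g b) ∈ codedCylinder n (x n)} := by
  refine (IsLocallyConstant.iff_eventually_eq _).2 fun x => ?_
  filter_upwards [(isOpen_cylinder _ x (n + 1)).mem_nhds (self_mem_cylinder x (n + 1))] with y hy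
  rw [mem_cylinder_iff] at hy
  ext b
  simp only [mem_ofPred_eq, hy n n.lt_succ_self]
  exact codedCylinder_congr fun i hi => by simp [Function.prod, hy i (hi.trans n.lt_succ_self)]

end BaireSpace

namespace SumDiscreteProd

variable {S : Type*} [MetricSpace S]

theorem dist_eq (p q : SumDiscreteProd S) :
    dist p q = dist p.fst q.fst + if p.snd = q.snd then 0 else 1 := rfl

theorem snd_eq_of_dist_lt_one {p q : SumDiscreteProd S} (h : dist p q < 1) : p.snd = q.snd := by
  by_contra hne
  rw [dist_eq, if_neg hne] at h
  linarith [dist_nonneg (x := p.fst) (y := q.fst)]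

theorem isometry_mk (α : ℝ) : Isometry fun s : S => (⟨s, α⟩ : SumDiscreteProd S) :=
  Isometry.of_dist_eq fun a b => by simp [dist_eq]

theorem lipschitzWith_fst : LipschitzWith 1 (fst : SumDiscreteProd S → S) :=
  LipschitzWith.mk_one fun p q => by
    rw [dist_eq]
    split_ifs <;> linarith

theorem continuous_mul_fst {h : S → ℝ} (hh : Continuous h) (c : ℝ → ℝ) :
    Continuous fun p : SumDiscreteProd S => c p.snd * h p.fst := by
  refine continuous_iff_continuousAt.2 fun p => ?_
  have hp : ContinuousAt (fun q : SumDiscreteProd S => c p.snd * h q.fst) p :=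
    (continuous_const.mul (hh.comp lipschitzWith_fst.continuous)).continuousAt
  refine hp.congr ?_
  filter_upwards [ball_mem_nhds p one_pos] with q hq
  rw [snd_eq_of_dist_lt_one hq]

theorem forall_not_uniformContinuousOn_mul_fst_iff [Nonempty S] {h : S → ℝ}
    (hh : ∀ s {r : ℝ}, 0 < r → ¬ UniformContinuousOn h (ball s r)) (c : ℝ → ℝ) :
    (∀ x : SumDiscreteProd S, ¬ ∃ U ∈ 𝓝 x,
      UniformContinuousOn (fun p : SumDiscreteProd S => c p.snd * h p.fst) U) ↔ ∀ α, c α ≠ 0 := by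
  constructor
  · intro H α hα
    obtain ⟨s⟩ := ‹Nonempty S›
    refine H ⟨s, α⟩ ⟨ball ⟨s, α⟩ 1, ball_mem_nhds _ one_pos,
      Metric.uniformContinuousOn_iff.2 fun ε hε => ⟨1, one_pos, fun p hp q hq _ => ?_⟩⟩
    rw [snd_eq_of_dist_lt_one hp, snd_eq_of_dist_lt_one hq, hα]
    simpa using hε
  · rintro H ⟨s, α⟩ ⟨U, hU, hUC⟩
    obtain ⟨r, hr, hrU⟩ := Metric.mem_nhds_iff.1 hU
    refine hh s hr ?_
    have hslice : UniformContinuousOn (fun t => c α * h t) (ball s r) :=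
      hUC.comp (isometry_mk α).uniformContinuous.uniformContinuousOn fun t ht =>
        hrU (by simpa [(isometry_mk α).dist_eq] using ht)
    simpa [Function.comp_def, inv_mul_cancel_left₀ (H α)] using
      (Real.uniformContinuous_const_mul (x := (c α)⁻¹)).comp_uniformContinuousOn hslice

noncomputable def indicatorMul (T : Set ℝ) (h : S →ᵇ ℝ) : SumDiscreteProd S →ᵇ ℝ :=
  .ofNormedAddCommGroup (fun p => T.indicator 1 p.snd * h p.fst)
    (continuous_mul_fst h.continuous _) ‖h‖ fun p => by
      rw [norm_mul]
      refine (mul_le_of_le_one_left (norm_nonneg _) ?_).trans (h.norm_coe_le_norm _)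
      by_cases hp : p.snd ∈ T <;> simp [hp]

theorem norm_indicatorMul_le (T : Set ℝ) (h : S →ᵇ ℝ) : ‖indicatorMul T h‖ ≤ ‖h‖ :=
  BoundedContinuousFunction.norm_ofNormedAddCommGroup_le _ (norm_nonneg h) _

theorem norm_half_pow_smul_indicatorMul_le (n : ℕ) (T : Set ℝ) (h : S →ᵇ ℝ) :
    ‖(1 / 2 : ℝ) ^ n • indicatorMul T h‖ ≤ (1 / 2) ^ n * ‖h‖ := by
  rw [norm_smul, norm_pow, Real.norm_of_nonneg (by norm_num)]
  gcongr
  exact norm_indicatorMul_le T h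

theorem tsum_half_pow_smul_indicatorMul_apply (T : ℕ → Set ℝ) (h : S →ᵇ ℝ)
    (p : SumDiscreteProd S) :
    (∑' n, (1 / 2 : ℝ) ^ n • indicatorMul (T n) h) p =
      (∑' n, (1 / 2 : ℝ) ^ n * (T n).indicator 1 p.snd) * h p.fst := by
  have hsum : Summable fun n => (1 / 2 : ℝ) ^ n • indicatorMul (T n) h :=
    .of_norm_bounded (summable_geometric_two.mul_right ‖h‖)
      fun n => norm_half_pow_smul_indicatorMul_le n (T n) h
  rw [← tsum_mul_right, ← BoundedContinuousFunction.evalCLM_apply ℝ,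
    ContinuousLinearMap.map_tsum _ hsum]
  simp only [BoundedContinuousFunction.evalCLM_apply, BoundedContinuousFunction.coe_smul,
    smul_eq_mul, mul_assoc]
  rfl

theorem continuous_tsum_half_pow_smul_indicatorMul {Y : Type*} [TopologicalSpace Y]
    {T : ℕ → Y → Set ℝ} (hT : ∀ n, IsLocallyConstant (T n)) (h : S →ᵇ ℝ) :
    Continuous fun y => ∑' n, (1 / 2 : ℝ) ^ n • indicatorMul (T n y) h :=
  continuous_tsum (fun n => ((hT n).comp fun T => (1 / 2 : ℝ) ^ n • indicatorMul T h).continuous)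
    (summable_geometric_two.mul_right ‖h‖) fun n _ => norm_half_pow_smul_indicatorMul_le n _ h

end SumDiscreteProd

theorem NowhereLocallyCompact.exists_continuous_preimage_eq {S : Type*} [MetricSpace S]
    [Nonempty S] (hS : NowhereLocallyCompact S) :
    ∃ Φ : (ℕ → ℕ) → (SumDiscreteProd S →ᵇ ℝ), Continuous Φ ∧
      Φ ⁻¹' {f | ∀ x, ¬ ∃ U ∈ 𝓝 x, UniformContinuousOn (f : SumDiscreteProd S → ℝ) U} =
        {x | ∀ z, ∃ n, Function.prod x z ∈ codedCylinder n (x n)} := by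
  obtain ⟨h, hh⟩ := hS.exists_forall_not_uniformContinuousOn_ball
  obtain ⟨E⟩ : Nonempty (ℝ ≃ (ℕ → ℕ)) := Cardinal.eq.1 (by simp [Cardinal.mk_real])
  let T : ℕ → (ℕ → ℕ) → Set ℝ := fun n x =>
    {α | Function.prod x (E α) ∈ codedCylinder n (x n)}
  refine ⟨_, SumDiscreteProd.continuous_tsum_half_pow_smul_indicatorMul
    (isLocallyConstant_setOf_prod_mem_codedCylinder E) h, ?_⟩
  ext x
  simp only [mem_preimage, mem_ofPred_eq]
  rw [funext (SumDiscreteProd.tsum_half_pow_smul_indicatorMul_apply (T · x) h)]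
  refine (SumDiscreteProd.forall_not_uniformContinuousOn_mul_fst_iff hh
    fun α => ∑' n, (1 / 2 : ℝ) ^ n * (T n x).indicator 1 α).trans ?_
  simp only [tsum_half_pow_mul_indicator_ne_zero_iff]
  exact (E.surjective.forall
    (p := fun z => ∃ n, Function.prod x z ∈ codedCylinder n (x n))).symm

/-- For `S` a nonempty, nowhere locally compact metric space and
`X = S × ℝ` with the metric `d((s₁,α₁),(s₂,α₂)) = d_S(s₁,s₂) + d_d(α₁,α₂)` (`d_d` being the
discrete metric on `ℝ`), the set of bounded continuous, nowhere locally uniformly continuous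
real-valued functions on `X` is not a Borel subset of `C_b(X)` with the supremum norm. -/
theorem not_borel_nowhereLocallyUniformlyContinuous_sumDiscreteProd
    {S : Type*} [MetricSpace S] [Nonempty S]
    (hnlc : ∀ s : S, ¬ ∃ K ∈ nhds s, IsCompact K) :
    ¬ MeasurableSet[borel (BoundedContinuousFunction (SumDiscreteProd S) ℝ)]
      {f : BoundedContinuousFunction (SumDiscreteProd S) ℝ |
        ∀ x : SumDiscreteProd S,
          ¬ ∃ U ∈ nhds x, UniformContinuousOn (f : SumDiscreteProd S → ℝ) U} := by
  intro hBorel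
  borelize (SumDiscreteProd S →ᵇ ℝ)
  obtain ⟨Φ, hΦ, hpre⟩ := NowhereLocallyCompact.exists_continuous_preimage_eq hnlc
  exact not_analyticSet_setOf_forall_exists_codedCylinder
    (hpre ▸ (hΦ.measurable hBorel).analyticSet)
end
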